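/- arXiv:1512.03184 — 3 statements merged into one kernel-verified Lean document; each statement's English description precedes it below -/
import Mathlib

section
/- Let (n_k) and (l_k) be sequences of natural numbers with l_k ≤ n_k for all k, such that n_k → ∞ and l_k²/n_k → 0 as k → ∞. Then n_k! / ((n_k − l_k)! · n_k^{l_k}) → 1 as k → ∞. -/
/-!
The ratio is the falling factorial `n (n-1) ⋯ (n-l+1)` divided by `n^l`. It is at most `1`, and since
every factor is at least `n + 1 - l`, Bernoulli's inequality bounds it below by
`(1 - (l-1)/n)^l ≥ 1 - l(l-1)/n ≥ 1 - l²/n`. Squeeze.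
-/

open Filter Topology

namespace Nat

theorem one_sub_sq_div_le_descFactorial_div_pow {n l : ℕ} (hln : l ≤ n) :
    1 - (l : ℝ) ^ 2 / n ≤ n.descFactorial l / (n : ℝ) ^ l := by
  rcases Nat.eq_zero_or_pos n with rfl | hn
  · obtain rfl : l = 0 := Nat.le_zero.mp hln
    simp
  have hn' : (0 : ℝ) < n := by exact_mod_cast hn
  have hbase : ((n + 1 - l : ℕ) : ℝ) = n * (1 + (1 - l) / n) := by
    rw [Nat.cast_sub (by omega)]
    field_simp
    push_cast
    ring
  have hbern : -2 ≤ (1 - (l : ℝ)) / n := by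
    rw [le_div_iff₀ hn']
    have : (l : ℝ) ≤ n := by exact_mod_cast hln
    linarith
  calc 1 - (l : ℝ) ^ 2 / n ≤ 1 + l * ((1 - l) / n) := by
        rw [mul_div_assoc', sub_eq_add_neg, ← neg_div]
        gcongr
        nlinarith [l.cast_nonneg (α := ℝ)]
    _ ≤ (1 + (1 - l) / n) ^ l := one_add_mul_le_pow hbern l
    _ = ((n + 1 - l : ℕ) : ℝ) ^ l / (n : ℝ) ^ l := by
        rw [hbase, mul_pow, mul_div_cancel_left₀ _ (by positivity)]
    _ ≤ n.descFactorial l / (n : ℝ) ^ l := by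
        gcongr
        exact_mod_cast Nat.pow_sub_le_descFactorial n l

theorem descFactorial_div_pow_le_one (n l : ℕ) : (n.descFactorial l : ℝ) / (n : ℝ) ^ l ≤ 1 :=
  div_le_one_of_le₀ (by exact_mod_cast Nat.descFactorial_le_pow n l) (by positivity)

theorem factorial_div_factorial_sub_mul_pow {n l : ℕ} (hln : l ≤ n) :
    (n ! : ℝ) / ((n - l)! * (n : ℝ) ^ l) = n.descFactorial l / (n : ℝ) ^ l := by
  rw [← Nat.factorial_mul_descFactorial hln, Nat.cast_mul,
    mul_div_mul_left _ _ (by positivity)]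

end Nat

theorem tendsto_descFactorial_div_pow {ι : Type*} {f : Filter ι} {n l : ι → ℕ}
    (hln : ∀ k, l k ≤ n k) (hl2 : Tendsto (fun k => (l k : ℝ) ^ 2 / n k) f (𝓝 0)) :
    Tendsto (fun k => ((n k).descFactorial (l k) : ℝ) / (n k : ℝ) ^ l k) f (𝓝 1) := by
  have hlower : Tendsto (fun k => 1 - (l k : ℝ) ^ 2 / n k) f (𝓝 1) := by
    simpa using tendsto_const_nhds.sub hl2
  exact tendsto_of_tendsto_of_tendsto_of_le_of_le hlower tendsto_const_nhds
    (fun k => Nat.one_sub_sq_div_le_descFactorial_div_pow (hln k))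
    (fun k => Nat.descFactorial_div_pow_le_one (n k) (l k))

theorem stmt0_general (n l : ℕ → ℕ) (hln : ∀ k, l k ≤ n k)
    (hl2 : Filter.Tendsto (fun k => ((l k : ℝ)) ^ 2 / (n k : ℝ))
      Filter.atTop (nhds 0)) :
    Filter.Tendsto
      (fun k => ((n k).factorial : ℝ) /
        (((n k - l k).factorial : ℝ) * (n k : ℝ) ^ (l k)))
      Filter.atTop (nhds 1) := by
  simpa only [Nat.factorial_div_factorial_sub_mul_pow (hln _)] using
    tendsto_descFactorial_div_pow hln hl2

/-- **Lemma 1 (paper).** If `l_k ≤ n_k`, `n_k → ∞` and `l_k² / n_k → 0`,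
then `n_k! / ((n_k − l_k)! · n_k ^ l_k) → 1`. -/
theorem stmt0 (n l : ℕ → ℕ) (hln : ∀ k, l k ≤ n k)
    (hn : Filter.Tendsto n Filter.atTop Filter.atTop)
    (hl2 : Filter.Tendsto (fun k => ((l k : ℝ)) ^ 2 / (n k : ℝ))
      Filter.atTop (nhds 0)) :
    Filter.Tendsto
      (fun k => ((n k).factorial : ℝ) /
        (((n k - l k).factorial : ℝ) * (n k : ℝ) ^ (l k)))
      Filter.atTop (nhds 1) :=
  stmt0_general n l hln hl2
end

section
/- Let (n_k) and (l_k) be sequences of natural numbers with l_k < n_k for all k and l_k²/n_k → 0 as k → ∞. Then (1 − l_k/n_k)^{−(n_k − l_k + 1/2)} · e^{−l_k} → 1 as k → ∞. -/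
/-! The logarithm of the expression is `-(n - l + 1/2) log (1 - l/n) - l`. The elementary bounds
`x ≤ -log (1 - x) ≤ x / (1 - x)` put it between `-l²/n` and `l / (2(n - l))`, and for integers
`0 < l < n` the latter is at most `l²/n`; so it tends to `0`. -/

open Filter Real

noncomputable def logRatioError (N L : ℝ) : ℝ :=
  -(N - L + 1 / 2) * log (1 - L / N) - L

lemma one_sub_div_pos {N L : ℝ} (hLN : L < N) (hN : 0 < N) : 0 < 1 - L / N := by
  rw [sub_pos, div_lt_one hN]; exact hLN

lemma neg_sq_div_le_logRatioError {N L : ℝ} (hL : 0 ≤ L) (hLN : L < N) :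
    -(L ^ 2 / N) ≤ logRatioError N L := by
  have hN : 0 < N := hL.trans_lt hLN
  have hlog : log (1 - L / N) ≤ -(L / N) := by
    linarith [log_le_sub_one_of_pos (one_sub_div_pos hLN hN)]
  have hc : 0 ≤ N - L + 1 / 2 := by linarith
  calc -(L ^ 2 / N) ≤ (N - L + 1 / 2) * (L / N) - L := by
        field_simp; nlinarith
    _ ≤ logRatioError N L := by
        unfold logRatioError; nlinarith [mul_le_mul_of_nonneg_left hlog hc]

lemma logRatioError_le {N L : ℝ} (hLN : L < N) (hN : 0 < N) :
    logRatioError N L ≤ L / (2 * (N - L)) := by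
  have hNL : 0 < N - L := by linarith
  have hlog : -(L / (N - L)) ≤ log (1 - L / N) := by
    have h := one_sub_inv_le_log_of_pos (one_sub_div_pos hLN hN)
    have : 1 - (1 - L / N)⁻¹ = -(L / (N - L)) := by field_simp; ring
    linarith
  have hc : 0 ≤ N - L + 1 / 2 := by linarith
  calc logRatioError N L ≤ (N - L + 1 / 2) * (L / (N - L)) - L := by
        unfold logRatioError; nlinarith [mul_le_mul_of_nonneg_left hlog hc]
    _ = L / (2 * (N - L)) := by field_simp; ring

lemma div_two_mul_sub_le_sq_div {n l : ℕ} (hln : l < n) :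
    (l : ℝ) / (2 * (n - l)) ≤ (l : ℝ) ^ 2 / n := by
  rcases Nat.eq_zero_or_pos l with rfl | hl
  · simp
  have hln' : (l : ℝ) + 1 ≤ n := by exact_mod_cast hln
  have hl' : (1 : ℝ) ≤ l := by exact_mod_cast hl
  rw [div_le_div_iff₀ (by linarith) (by linarith)]
  -- `n ≥ l + 1` and `l ≥ 1` give `n (2l - 1) ≥ 2l²`
  have key : 0 ≤ ((n : ℝ) - l - 1) * (2 * l - 1) := mul_nonneg (by linarith) (by linarith)
  nlinarith [mul_nonneg key (by linarith : (0 : ℝ) ≤ l)]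

lemma abs_logRatioError_le {n l : ℕ} (hln : l < n) :
    |logRatioError n l| ≤ (l : ℝ) ^ 2 / n := by
  have hLN : (l : ℝ) < n := by exact_mod_cast hln
  rw [abs_le]
  exact ⟨neg_sq_div_le_logRatioError l.cast_nonneg hLN,
    (logRatioError_le hLN (by linarith [l.cast_nonneg (α := ℝ)])).trans
      (div_two_mul_sub_le_sq_div hln)⟩

lemma one_sub_div_rpow_mul_exp_neg {N L : ℝ} (hLN : L < N) (hN : 0 < N) :
    (1 - L / N) ^ (-(N - L + 1 / 2)) * exp (-L) = exp (logRatioError N L) := by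
  rw [rpow_def_of_pos (one_sub_div_pos hLN hN), ← exp_add, logRatioError]
  ring_nf

/-- Exponential-approximation step of Lemma 1:
if `l_k < n_k` and `l_k²/n_k → 0`, then
`(1 − l_k/n_k)^{−(n_k − l_k + 1/2)} · e^{−l_k} → 1`. -/
theorem stmt2 (n l : ℕ → ℕ) (hln : ∀ k, l k < n k)
    (hl2 : Filter.Tendsto (fun k => ((l k : ℝ)) ^ 2 / (n k : ℝ))
      Filter.atTop (nhds 0)) :
    Filter.Tendsto
      (fun k => (1 - (l k : ℝ) / (n k : ℝ)) ^
          (-((n k : ℝ) - (l k : ℝ) + 1 / 2)) * Real.exp (-(l k : ℝ)))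
      Filter.atTop (nhds 1) := by
  have herr : Tendsto (fun k => logRatioError (n k) (l k)) atTop (nhds 0) :=
    squeeze_zero_norm (fun k => abs_logRatioError_le (hln k)) hl2
  have hexp := (continuous_exp.tendsto 0).comp herr
  rw [exp_zero] at hexp
  refine hexp.congr fun k => (one_sub_div_rpow_mul_exp_neg ?_ ?_).symm
  · exact_mod_cast hln k
  · exact_mod_cast (hln k).pos
end

section
/- For every integer l with 1 ≤ l ≤ n1, the expectation of X_l equals n2 · ((n1−1)!/(n1−l)!) · p1^{l−1} · b. -/
open MeasureTheory

/-- The Bernoulli measure on `Bool` with success probability `p` (for `p ∈ [0,1]`). -/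
noncomputable def bernoulliMeasure (p : ℝ) : Measure Bool :=
  ENNReal.ofReal p • Measure.dirac true + ENNReal.ofReal (1 - p) • Measure.dirac false

/-- Sample space: one Boolean indicator for each unordered pair of vertices of the
backward class `V1 = Fin n1`, and one for each pair in `V1 × V2`. -/
abbrev Omega (n1 n2 : ℕ) : Type :=
  (Sym2 (Fin n1) → Bool) × (Fin n1 × Fin n2 → Bool)

/-- Product measure: each within-`V1` edge indicator is Bernoulli(`p1`), each bridge
indicator is Bernoulli(`b`), all independent. -/
noncomputable def graphMeasure (n1 n2 : ℕ) (p1 b : ℝ) : Measure (Omega n1 n2) :=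
  (Measure.pi fun _ : Sym2 (Fin n1) => bernoulliMeasure p1).prod
    (Measure.pi fun _ : Fin n1 × Fin n2 => bernoulliMeasure b)

open scoped Classical in
/-- Entry paths of length `l` from `u`: tuples `(v_1, …, v_l, w)` with
`v_1 = u`, the `v_i ∈ V1` pairwise distinct, and `w ∈ V2`. -/
noncomputable def entryPaths (n1 n2 l : ℕ) (u : Fin n1) :
    Finset ((Fin l → Fin n1) × Fin n2) :=
  Finset.univ.filter fun P => Function.Injective P.1 ∧ ∀ h : 0 < l, P.1 ⟨0, h⟩ = u

/-- An entry path is present in the outcome `ω` if all `l − 1` within-`V1` edges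
along it and its final bridge are present. -/
def present (n1 n2 l : ℕ) (P : (Fin l → Fin n1) × Fin n2) (ω : Omega n1 n2) : Prop :=
  (∀ j : Fin (l - 1),
      ω.1 s(P.1 ⟨j.1, lt_of_lt_of_le j.2 (Nat.sub_le l 1)⟩,
            P.1 ⟨j.1 + 1, Nat.add_lt_of_lt_sub j.2⟩) = true) ∧
  ∀ h : 0 < l, ω.2 (P.1 ⟨l - 1, Nat.sub_lt h Nat.one_pos⟩, P.2) = true

open scoped Classical in
/-- `X_l`: the number of present entry paths of length `l` from `u`, as a real number. -/
noncomputable def pathCount (n1 n2 l : ℕ) (u : Fin n1) (ω : Omega n1 n2) : ℝ :=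
  ((entryPaths n1 n2 l u).filter fun P => present n1 n2 l P ω).card

/-! By linearity of expectation, `E[X_l]` is the sum over entry paths of the probability that
the path is present. Since the vertices of an entry path are distinct, its `l - 1` edges inside
`V1` are distinct, so together with the bridge they are `l` independent indicators and the path is
present with probability `p1 ^ (l - 1) * b`. An entry path is `u`, followed by an injective
`(l - 1)`-tuple in `V1 \ {u}`, followed by an endpoint in `V2`: there are
`(n1 - 1)! / (n1 - l)! * n2` of them. -/

open MeasureTheory Finset Function

lemma Nat.cast_descFactorial_eq_div {K : Type*} [DivisionSemiring K] [CharZero K] {n k : ℕ}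
    (h : k ≤ n) : (n.descFactorial k : K) = n.factorial / (n - k).factorial := by
  rw [Nat.descFactorial_eq_div h, Nat.cast_div (Nat.factorial_dvd_factorial (Nat.sub_le n k))
    (Nat.cast_ne_zero.2 (Nat.factorial_ne_zero _))]

lemma integral_natCast_card_filter {Ω ι : Type*} [MeasurableSpace Ω] (μ : Measure Ω)
    [IsFiniteMeasure μ] (s : Finset ι) (p : ι → Ω → Prop) [∀ ω, DecidablePred (p · ω)]
    (hp : ∀ i ∈ s, MeasurableSet {ω | p i ω}) :
    ∫ ω, (#{i ∈ s | p i ω} : ℝ) ∂μ = ∑ i ∈ s, μ.real {ω | p i ω} := by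
  have hcard : ∀ ω, (#{i ∈ s | p i ω} : ℝ) = ∑ i ∈ s, {ω | p i ω}.indicator 1 ω := fun ω => by
    simp only [natCast_card_filter, Set.indicator_apply, Set.mem_ofPred_eq, Pi.one_apply]
  simp_rw [hcard]
  rw [integral_finsetSum s fun i hi => (integrable_const 1).indicator (hp i hi)]
  exact sum_congr rfl fun i hi => integral_indicator_one (hp i hi)

section Tuples

variable {α : Type*}

def injectiveTupleHeadEquiv {m : ℕ} (a : α) :
    {f : Fin (m + 1) → α // Injective f ∧ f 0 = a} ≃ (Fin m ↪ {x // x ≠ a}) where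
  toFun f := ⟨fun j => ⟨f.1 j.succ, fun h => Fin.succ_ne_zero j (f.2.1 (h.trans f.2.2.symm))⟩,
    fun _ _ h => Fin.succ_injective _ (f.2.1 (congrArg Subtype.val h))⟩
  invFun g := ⟨Fin.cons a (Subtype.val ∘ g),
    Fin.cons_injective_iff.2 ⟨fun ⟨j, hj⟩ => (g j).2 hj, Subtype.val_injective.comp g.injective⟩,
    rfl⟩
  left_inv f := Subtype.ext (funext (Fin.cases f.2.2.symm fun _ => rfl))
  right_inv _ := rfl

lemma card_injective_tuple_head_eq [Fintype α] [DecidableEq α] (m : ℕ) (a : α) :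
    Fintype.card {f : Fin (m + 1) → α // Injective f ∧ f 0 = a} =
      (Fintype.card α - 1).descFactorial m := by
  rw [Fintype.card_congr (injectiveTupleHeadEquiv a), Fintype.card_embedding_eq,
    Fintype.card_fin, Fintype.card_subtype_compl, Fintype.card_subtype_eq]

variable [DecidableEq α]

def innerEdges {l : ℕ} (v : Fin l → α) : Finset (Sym2 α) :=
  univ.image fun j : Fin (l - 1) =>
    s(v ⟨j, lt_of_lt_of_le j.2 (Nat.sub_le l 1)⟩, v ⟨j + 1, Nat.add_lt_of_lt_sub j.2⟩)

lemma card_innerEdges {l : ℕ} {v : Fin l → α} (hv : Injective v) :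
    #(innerEdges v) = l - 1 := by
  rw [innerEdges, card_image_of_injective, card_univ, Fintype.card_fin]
  intro j k h
  rcases Sym2.eq_iff.1 h with ⟨h1, -⟩ | ⟨h1, h2⟩
  · exact Fin.ext (Fin.mk.inj (hv h1))
  · have := Fin.mk.inj (hv h1)
    have := Fin.mk.inj (hv h2)
    omega

end Tuples

lemma card_entryPaths {l : ℕ} (n1 n2 : ℕ) (hl : 0 < l) (u : Fin n1) :
    #(entryPaths n1 n2 l u) = (n1 - 1).descFactorial (l - 1) * n2 := by
  classical
  obtain ⟨m, rfl⟩ : ∃ m, l = m + 1 := ⟨l - 1, by omega⟩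
  have hsplit : entryPaths n1 n2 (m + 1) u =
      ({f : Fin (m + 1) → Fin n1 | Injective f ∧ f 0 = u} : Finset _) ×ˢ univ := by
    ext P
    simp [entryPaths]
  rw [hsplit, card_product, ← Fintype.card_subtype, card_injective_tuple_head_eq, card_univ,
    Fintype.card_fin, Fintype.card_fin, Nat.add_sub_cancel]

lemma bernoulliMeasure_singleton_true (p : ℝ) :
    bernoulliMeasure p {true} = ENNReal.ofReal p := by
  simp [bernoulliMeasure]

lemma isProbabilityMeasure_bernoulliMeasure {p : ℝ} (h0 : 0 ≤ p) (h1 : p ≤ 1) :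
    IsProbabilityMeasure (bernoulliMeasure p) :=
  ⟨by simp [bernoulliMeasure, ← ENNReal.ofReal_add h0 (sub_nonneg.2 h1)]⟩

lemma isProbabilityMeasure_graphMeasure (n1 n2 : ℕ) {p1 b : ℝ} (hp0 : 0 ≤ p1) (hp1 : p1 ≤ 1)
    (hb0 : 0 ≤ b) (hb1 : b ≤ 1) : IsProbabilityMeasure (graphMeasure n1 n2 p1 b) := by
  have := isProbabilityMeasure_bernoulliMeasure hp0 hp1
  have := isProbabilityMeasure_bernoulliMeasure hb0 hb1
  unfold graphMeasure
  infer_instance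

lemma setOf_present_eq {n1 n2 l : ℕ} (hl : 0 < l) (P : (Fin l → Fin n1) × Fin n2) :
    {ω : Omega n1 n2 | present n1 n2 l P ω} =
      (↑(innerEdges P.1) : Set (Sym2 (Fin n1))).pi (fun _ => {true}) ×ˢ
        (↑({(P.1 ⟨l - 1, Nat.sub_lt hl Nat.one_pos⟩, P.2)} : Finset (Fin n1 × Fin n2)) :
          Set (Fin n1 × Fin n2)).pi (fun _ => {true}) := by
  ext ω
  simp [present, innerEdges, hl]

lemma measureReal_setOf_present {n1 n2 l : ℕ} {p1 b : ℝ} (hp0 : 0 ≤ p1) (hp1 : p1 ≤ 1)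
    (hb0 : 0 ≤ b) (hb1 : b ≤ 1) (hl : 0 < l) {P : (Fin l → Fin n1) × Fin n2}
    (hP : Injective P.1) :
    (graphMeasure n1 n2 p1 b).real {ω | present n1 n2 l P ω} = p1 ^ (l - 1) * b := by
  have := isProbabilityMeasure_bernoulliMeasure hp0 hp1
  have := isProbabilityMeasure_bernoulliMeasure hb0 hb1
  rw [setOf_present_eq hl, measureReal_def, graphMeasure, Measure.prod_prod,
    Measure.pi_pi_finset, Measure.pi_pi_finset]
  simp [bernoulliMeasure_singleton_true, card_innerEdges hP, hp0, hb0]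

theorem stmt6_general (n1 n2 : ℕ) (u : Fin n1)
    (p1 b : ℝ) (hp0 : 0 ≤ p1) (hp1 : p1 ≤ 1) (hb0 : 0 ≤ b) (hb1 : b ≤ 1)
    (l : ℕ) (hl1 : 1 ≤ l) (hln : l ≤ n1) :
    ∫ ω, pathCount n1 n2 l u ω ∂(graphMeasure n1 n2 p1 b) =
      (n2 : ℝ) * (((n1 - 1).factorial : ℝ) / ((n1 - l).factorial : ℝ)) *
        p1 ^ (l - 1) * b := by
  classical
  have := isProbabilityMeasure_graphMeasure n1 n2 hp0 hp1 hb0 hb1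
  have hExpect : ∫ ω, pathCount n1 n2 l u ω ∂(graphMeasure n1 n2 p1 b) =
      ∑ P ∈ entryPaths n1 n2 l u, p1 ^ (l - 1) * b :=
    (integral_natCast_card_filter _ _ _ fun _ _ => (Set.toFinite _).measurableSet).trans
      (sum_congr rfl fun _ hP =>
        measureReal_setOf_present hp0 hp1 hb0 hb1 hl1 (mem_filter.1 hP).2.1)
  rw [hExpect, sum_const, nsmul_eq_mul, card_entryPaths n1 n2 hl1, Nat.cast_mul,
    Nat.cast_descFactorial_eq_div (by omega : l - 1 ≤ n1 - 1),
    show n1 - 1 - (l - 1) = n1 - l by omega]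
  ring

/-- **Lemma 3 (exact expectation).** For `1 ≤ l ≤ n1`,
`E[X_l] = n2 · ((n1−1)!/(n1−l)!) · p1^{l−1} · b`. -/
theorem stmt6 (n1 n2 : ℕ) (hn1 : 0 < n1) (hn2 : 0 < n2) (u : Fin n1)
    (p1 b : ℝ) (hp0 : 0 ≤ p1) (hp1 : p1 ≤ 1) (hb0 : 0 ≤ b) (hb1 : b ≤ 1)
    (l : ℕ) (hl1 : 1 ≤ l) (hln : l ≤ n1) :
    ∫ ω, pathCount n1 n2 l u ω ∂(graphMeasure n1 n2 p1 b) =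
      (n2 : ℝ) * (((n1 - 1).factorial : ℝ) / ((n1 - l).factorial : ℝ)) *
        p1 ^ (l - 1) * b :=
  stmt6_general n1 n2 u p1 b hp0 hp1 hb0 hb1 l hl1 hln
end
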